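/- Let A be a max-automaton, let ρ be the run of A on an infinite word α, and let c be a counter of A. Then limsup ρ_c = ∞ if and only if ρ contains arbitrarily long c-traces, i.e., for every m ∈ ℕ there is a c-trace of length m contained in ρ. -/
import Mathlib


/-- Counter operations over a set `C` of counters. -/
inductive CounterOp (C : Type*) where
  | inc : C → CounterOp C
  | reset : C → CounterOp C
  | max : C → C → C → CounterOp C

/-- Applying a single counter operation to a counter valuation. -/
def applyOp {C : Type*} [DecidableEq C] (ν : C → ℕ) : CounterOp C → C → ℕ
  | .inc c => Function.update ν c (ν c + 1)
  | .reset c => Function.update ν c 0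
  | .max c c₀ c₁ => Function.update ν c (Nat.max (ν c₀) (ν c₁))

/-- Applying a finite sequence of counter operations to a counter valuation. -/
def applyOps {C : Type*} [DecidableEq C] (ν : C → ℕ) : List (CounterOp C) → C → ℕ
  | [] => ν
  | op :: π => applyOps (applyOp ν op) π

/-- The transfer relation of a single counter operation. -/
def opTransfers {C : Type*} : CounterOp C → C → C → Prop
  | .inc _, c, d => c = d
  | .reset e, c, d => c = d ∧ c ≠ e
  | .max e c₀ c₁, c, d => (c = d ∧ c ≠ e) ∨ ((c = c₀ ∨ c = c₁) ∧ d = e)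

/-- `Transfers π c d`: the sequence `π` of counter operations transfers counter `c`
to counter `d`. -/
def Transfers {C : Type*} : List (CounterOp C) → C → C → Prop
  | [], c, d => c = d
  | op :: π, c, d => ∃ e, opTransfers op c e ∧ Transfers π e d

/-- `TransfersWith π c d m`: `π` transfers `c` to `d` with `m` increments, i.e. `π`
decomposes as `π₀ (inc e₁) π₁ ⋯ (inc e_m) π_m` with `π₀` transferring `c` to `e₁`,
`π_j` transferring `e_j` to `e_{j+1}`, and `π_m` transferring `e_m` to `d`. -/
inductive TransfersWith {C : Type*} : List (CounterOp C) → C → C → ℕ → Prop where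
  | zero {π : List (CounterOp C)} {c d : C} :
      Transfers π c d → TransfersWith π c d 0
  | step {π₀ π : List (CounterOp C)} {c e d : C} {m : ℕ} :
      Transfers π₀ c e → TransfersWith π e d m →
      TransfersWith (π₀ ++ CounterOp.inc e :: π) c d (m + 1)

/-- `π` is a `c`-trace of length `m`: it transfers some counter to `c` with `m` increments. -/
def IsTrace {C : Type*} (π : List (CounterOp C)) (c : C) (m : ℕ) : Prop :=
  ∃ c', TransfersWith π c' c m

/-- A (deterministic, complete) max-automaton with states `Q`, counters `C` and
input alphabet `S`: each transition is labeled by a finite sequence of counter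
operations, and the acceptance condition is a boolean combination of the
per-counter conditions "`limsup ρ_c < ∞`". -/
structure MaxAutomaton (S Q C : Type*) where
  init : Q
  step : Q → S → Q
  label : Q → S → List (CounterOp C)
  acc : (C → Prop) → Prop

namespace MaxAutomaton

variable {S Q C : Type*}

/-- The state of the (unique) run on `α` after `n` letters. -/
def stateAt (A : MaxAutomaton S Q C) (α : ℕ → S) : ℕ → Q
  | 0 => A.init
  | n + 1 => A.step (stateAt A α n) (α n)

/-- The counter valuation reached on the run on `α` after applying all operations
of the first `n` transition labels, starting from the zero valuation. -/
def valSeq [DecidableEq C] (A : MaxAutomaton S Q C) (α : ℕ → S) : ℕ → C → ℕ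
  | 0 => fun _ => 0
  | n + 1 => applyOps (valSeq A α n) (A.label (stateAt A α n) (α n))

/-- The run of `A` on `α` is accepting iff the acceptance condition is satisfied by
the assignment mapping counter `c` to true iff `limsup ρ_c < ∞`. -/
def Accepts [DecidableEq C] (A : MaxAutomaton S Q C) (α : ℕ → S) : Prop :=
  A.acc fun c => Filter.limsup (fun n => ((valSeq A α n c : ℕ) : ℕ∞)) Filter.atTop < ⊤

/-- The language of the max-automaton `A`. -/
def Lang [DecidableEq C] (A : MaxAutomaton S Q C) : Set (ℕ → S) :=
  { α | A.Accepts α }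

/-- The flattening of the labels of the first `n` transitions of the run of `A` on `α`. -/
def labelSeq (A : MaxAutomaton S Q C) (α : ℕ → S) : ℕ → List (CounterOp C)
  | 0 => []
  | n + 1 => labelSeq A α n ++ A.label (stateAt A α n) (α n)

/-- The run of `A` on `α` contains `π`: some prefix of the run ends with `π`. -/
def RunContains (A : MaxAutomaton S Q C) (α : ℕ → S) (π : List (CounterOp C)) : Prop :=
  ∃ n, π <:+ A.labelSeq α n

/-- The extended transition function `δ* : Q × Σ* → Q`. -/
def extStep (A : MaxAutomaton S Q C) : Q → List S → Q
  | q, [] => q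
  | q, a :: x => extStep A (A.step q a) x

/-- `ℓ(q, x)`: the sequence of transition labels along the run of `A` on `x` from `q`. -/
def labelsFrom (A : MaxAutomaton S Q C) : Q → List S → List (List (CounterOp C))
  | _, [] => []
  | q, a :: x => A.label q a :: labelsFrom A (A.step q a) x

end MaxAutomaton

section Aux

variable {C : Type*}

lemma applyOps_append [DecidableEq C] (ν : C → ℕ) (π₁ π₂ : List (CounterOp C)) :
    applyOps ν (π₁ ++ π₂) = applyOps (applyOps ν π₁) π₂ := by
  induction π₁ generalizing ν with
  | nil => rfl
  | cons op π ih => simp [applyOps, ih]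

lemma transfers_append {π₁ π₂ : List (CounterOp C)} {c e d : C}
    (h₁ : Transfers π₁ c e) (h₂ : Transfers π₂ e d) : Transfers (π₁ ++ π₂) c d := by
  induction π₁ generalizing c with
  | nil => have h : c = e := h₁; subst h; exact h₂
  | cons op π ih =>
    obtain ⟨e', ho, ht⟩ := h₁
    exact ⟨e', ho, ih ht⟩

lemma transfersWith_append_transfers {π π₂ : List (CounterOp C)} {c d d' : C} {m : ℕ}
    (h : TransfersWith π c d m) (h₂ : Transfers π₂ d d') :
    TransfersWith (π ++ π₂) c d' m := by
  induction h with
  | zero ht => exact .zero (transfers_append ht h₂)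
  | step ht htw ih =>
    have := TransfersWith.step ht (ih h₂)
    simpa using this

lemma transfersWith_inc {π : List (CounterOp C)} {c e : C} {m : ℕ}
    (h : TransfersWith π c e m) :
    TransfersWith (π ++ [CounterOp.inc e]) c e (m + 1) := by
  induction h with
  | zero ht => exact .step ht (.zero rfl)
  | step ht htw ih =>
    have := TransfersWith.step ht ih
    simpa using this

lemma transfersWith_peel {π : List (CounterOp C)} {c d : C} {m : ℕ}
    (h : TransfersWith π c d m) :
    ∀ k ≤ m, ∃ π' c', π' <:+ π ∧ TransfersWith π' c' d k := by
  induction h with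
  | zero ht =>
    intro k hk
    obtain rfl := Nat.le_zero.mp hk
    exact ⟨_, _, List.suffix_refl _, .zero ht⟩
  | @step π₀ π c e d m ht htw ih =>
    intro k hk
    rcases Nat.lt_or_ge k (m + 1) with h' | h'
    · obtain ⟨π', c', hs, htr⟩ := ih k (Nat.lt_succ_iff.mp h')
      exact ⟨π', c', hs.trans ⟨π₀ ++ [CounterOp.inc e], by simp⟩, htr⟩
    · obtain rfl : k = m + 1 := le_antisymm hk h'
      exact ⟨_, _, List.suffix_refl _, .step ht htw⟩

lemma transfers_le [DecidableEq C] {π : List (CounterOp C)} {c d : C}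
    (h : Transfers π c d) (ν : C → ℕ) : ν c ≤ applyOps ν π d := by
  induction π generalizing c ν with
  | nil => have h' : c = d := h; subst h'; exact le_refl _
  | cons op π ih =>
    obtain ⟨e, ho, ht⟩ := h
    refine le_trans ?_ (ih ht (applyOp ν op))
    cases op with
    | inc c'' =>
      have h' : c = e := ho
      subst h'
      by_cases h'' : c = c''
      · subst h''; simp [applyOp]
      · simp [applyOp, Function.update_of_ne h'']
    | reset c'' =>
      obtain ⟨h1, h2⟩ : c = e ∧ c ≠ c'' := ho
      subst h1
      simp [applyOp, Function.update_of_ne h2]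
    | max e' c₀ c₁ =>
      rcases (ho : (c = e ∧ c ≠ e') ∨ ((c = c₀ ∨ c = c₁) ∧ e = e')) with ⟨h1, h2⟩ | ⟨h1, h2⟩
      · subst h1; simp [applyOp, Function.update_of_ne h2]
      · subst h2
        rcases h1 with rfl | rfl <;> simp [applyOp, le_max_left, le_max_right]

lemma transfersWith_le [DecidableEq C] {π : List (CounterOp C)} {c d : C} {m : ℕ}
    (h : TransfersWith π c d m) (ν : C → ℕ) : ν c + m ≤ applyOps ν π d := by
  induction h generalizing ν with
  | zero ht => simpa using transfers_le ht ν
  | @step π₀ π c' e d' m' ht htw ih =>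
    rw [show π₀ ++ CounterOp.inc e :: π = (π₀ ++ [CounterOp.inc e]) ++ π by simp,
      applyOps_append, applyOps_append]
    have h1 : ν c' ≤ applyOps ν π₀ e := transfers_le ht ν
    have h2 := ih (applyOps (applyOps ν π₀) [CounterOp.inc e])
    have h3 : applyOps (applyOps ν π₀) [CounterOp.inc e] e = applyOps ν π₀ e + 1 := by
      simp [applyOps, applyOp]
    omega

lemma exists_trace_of_value [DecidableEq C] (π : List (CounterOp C)) (ν : C → ℕ) (c : C) :
    ∃ π' c' m, π' <:+ π ∧ TransfersWith π' c' c m ∧ applyOps ν π c ≤ ν c' + m := by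
  induction π using List.reverseRecOn generalizing c with
  | nil => exact ⟨[], c, 0, List.nil_suffix, .zero rfl, le_refl _⟩
  | append_singleton π op ih =>
    rw [applyOps_append]
    have suffix_ext : ∀ π' : List (CounterOp C), π' <:+ π → π' ++ [op] <:+ π ++ [op] := by
      rintro π' ⟨t, rfl⟩; exact ⟨t, by simp⟩
    cases op with
    | inc e =>
      by_cases hc : c = e
      · subst hc
        obtain ⟨π', c', m, hs, ht, hle⟩ := ih c
        refine ⟨π' ++ [CounterOp.inc c], c', m + 1, suffix_ext _ hs, transfersWith_inc ht, ?_⟩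
        simp only [applyOps, applyOp, Function.update_self]
        omega
      · obtain ⟨π', c', m, hs, ht, hle⟩ := ih c
        refine ⟨π' ++ [CounterOp.inc e], c', m, suffix_ext _ hs,
          transfersWith_append_transfers ht ⟨c, rfl, rfl⟩, ?_⟩
        simpa [applyOps, applyOp, Function.update_of_ne hc] using hle
    | reset e =>
      by_cases hc : c = e
      · subst hc
        refine ⟨[], c, 0, List.nil_suffix, .zero rfl, ?_⟩
        simp [applyOps, applyOp]
      · obtain ⟨π', c', m, hs, ht, hle⟩ := ih c
        refine ⟨π' ++ [CounterOp.reset e], c', m, suffix_ext _ hs,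
          transfersWith_append_transfers ht ⟨c, ⟨rfl, hc⟩, rfl⟩, ?_⟩
        simpa [applyOps, applyOp, Function.update_of_ne hc] using hle
    | max e c₀ c₁ =>
      by_cases hc : c = e
      · subst hc
        rcases le_total (applyOps ν π c₁) (applyOps ν π c₀) with hm | hm
        · obtain ⟨π', c', m, hs, ht, hle⟩ := ih c₀
          refine ⟨π' ++ [CounterOp.max c c₀ c₁], c', m, suffix_ext _ hs,
            transfersWith_append_transfers ht ⟨c, Or.inr ⟨Or.inl rfl, rfl⟩, rfl⟩, ?_⟩
          simp only [applyOps, applyOp, Function.update_self]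
          exact Nat.max_le.mpr ⟨hle, hm.trans hle⟩
        · obtain ⟨π', c', m, hs, ht, hle⟩ := ih c₁
          refine ⟨π' ++ [CounterOp.max c c₀ c₁], c', m, suffix_ext _ hs,
            transfersWith_append_transfers ht ⟨c, Or.inr ⟨Or.inr rfl, rfl⟩, rfl⟩, ?_⟩
          simp only [applyOps, applyOp, Function.update_self]
          exact Nat.max_le.mpr ⟨hm.trans hle, hle⟩
      · obtain ⟨π', c', m, hs, ht, hle⟩ := ih c
        refine ⟨π' ++ [CounterOp.max e c₀ c₁], c', m, suffix_ext _ hs,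
          transfersWith_append_transfers ht ⟨c, Or.inl ⟨rfl, hc⟩, rfl⟩, ?_⟩
        simpa [applyOps, applyOp, Function.update_of_ne hc] using hle

lemma valSeq_eq_applyOps {S Q : Type*} [DecidableEq C] (A : MaxAutomaton S Q C) (α : ℕ → S)
    (n : ℕ) : A.valSeq α n = applyOps (fun _ => 0) (A.labelSeq α n) := by
  induction n with
  | zero => rfl
  | succ n ih => simp [MaxAutomaton.valSeq, MaxAutomaton.labelSeq, applyOps_append, ih]

lemma limsup_coe_eq_top_iff (u : ℕ → ℕ) :
    Filter.limsup (fun n => ((u n : ℕ) : ℕ∞)) Filter.atTop = ⊤ ↔ ∀ m : ℕ, ∃ n, m ≤ u n := by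
  constructor
  · intro h m
    by_contra hn
    push_neg at hn
    have hb : Filter.limsup (fun n => ((u n : ℕ) : ℕ∞)) Filter.atTop ≤ (m : ℕ∞) := by
      refine Filter.limsup_le_of_le ?_ ?_
      · exact ⟨⊥, fun a _ => bot_le⟩
      · filter_upwards with n
        exact_mod_cast (hn n).le
    rw [h] at hb
    exact (lt_irrefl _ (lt_of_le_of_lt hb (by exact_mod_cast WithTop.coe_lt_top m)))
  · intro h
    by_contra hne
    obtain ⟨k, hk⟩ := WithTop.ne_top_iff_exists.mp hne
    have hle : ((k + 1 : ℕ) : ℕ∞) ≤ Filter.limsup (fun n => ((u n : ℕ) : ℕ∞)) Filter.atTop := by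
      refine Filter.le_limsup_of_frequently_le ?_ ⟨⊤, Filter.Eventually.of_forall fun a => le_top⟩
      rw [Filter.frequently_atTop]
      intro N
      obtain ⟨n, hn⟩ := h ((k + 1) + (Finset.range (N + 1)).sup u + 1)
      refine ⟨n, ?_, by exact_mod_cast le_trans (by omega) hn⟩
      by_contra hlt
      push_neg at hlt
      have : u n ≤ (Finset.range (N + 1)).sup u :=
        Finset.le_sup (Finset.mem_range.mpr (by omega))
      omega
    rw [← hk] at hle
    have : k + 1 ≤ k := by
      have h2 := (Nat.cast_le (α := ℕ∞)).mp hle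
      exact_mod_cast h2
    omega

end Aux

/-- `limsup ρ_c = ∞` iff the run contains arbitrarily long `c`-traces. -/
theorem limsup_top_iff_arbitrarily_long_traces
    {S Q C : Type*} [Fintype S] [Fintype Q] [Fintype C] [DecidableEq C]
    (A : MaxAutomaton S Q C) (α : ℕ → S) (c : C) :
    Filter.limsup (fun n => ((A.valSeq α n c : ℕ) : ℕ∞)) Filter.atTop = ⊤ ↔
      ∀ m : ℕ, ∃ π, IsTrace π c m ∧ A.RunContains α π := by
  rw [limsup_coe_eq_top_iff (fun n => A.valSeq α n c)]
  constructor
  · intro h m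
    obtain ⟨n, hn⟩ := h m
    obtain ⟨π', c', m', hs, ht, hle⟩ :=
      exists_trace_of_value (A.labelSeq α n) (fun _ => 0) c
    rw [← valSeq_eq_applyOps] at hle
    obtain ⟨π'', c'', hs', ht'⟩ := transfersWith_peel ht m (by omega)
    exact ⟨π'', ⟨c'', ht'⟩, n, hs'.trans hs⟩
  · intro h m
    obtain ⟨π, ⟨c', ht⟩, n, hs⟩ := h m
    obtain ⟨σ, hσ⟩ := hs
    refine ⟨n, ?_⟩
    have := transfersWith_le ht (applyOps (fun _ => 0) σ)
    have hv : A.valSeq α n c = applyOps (applyOps (fun _ => 0) σ) π c := by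
      rw [valSeq_eq_applyOps, ← hσ, applyOps_append]
    omega
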